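/- arXiv:1010.2006 — 2 statements merged into one kernel-verified Lean document; each statement's English description precedes it below -/
import Mathlib

section
/- Descartes' rule of signs: for a real polynomial A, the number R of positive real roots (counted with multiplicity) satisfies R ≤ var(A) and R ≡ var(A) (mod 2), where var(A) is the number of sign variations in the coefficient sequence of A. -/
/-!
The bound `R ≤ var A` is Mathlib's `Polynomial.roots_countP_pos_le_signVariations`, once `var` is
identified with `Polynomial.signVariations`: both count the sign changes of the nonzero
coefficients, read in opposite directions.

For the parity, both `var A` and `R` are even exactly when the trailing and the leading coefficient
of `A` have the same sign. For the sign variations this follows by erasing leading terms one at a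
time. For the roots, every positive root `η` splits off a factor `X - η`, which flips the sign of
the trailing coefficient and keeps the leading one; a polynomial without positive roots has no
roots on `[0, ∞)` after removing its powers of `X`, so by the intermediate value theorem its value
at `0` (the trailing coefficient) has the sign it has at infinity (that of the leading one).
-/

open Polynomial

/-- Number of sign changes in a list of reals, after discarding zeros. -/
noncomputable def signVar (l : List ℝ) : ℕ :=
  letI := Classical.decEq ℝ
  letI : DecidablePred fun p : ℝ × ℝ => p.1 * p.2 < 0 := fun _ => Classical.dec _
  let l' := l.filter (· ≠ 0)
  (l'.zip l'.tail).countP fun p => p.1 * p.2 < 0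

/-- Number of sign variations in the coefficient sequence of a real polynomial. -/
noncomputable def var (A : Polynomial ℝ) : ℕ :=
  signVar ((List.range (A.natDegree + 1)).map A.coeff)

namespace List

variable {α : Type*}

theorem length_destutter'_ne [DecidableEq α] (a : α) (l : List α) :
    (l.destutter' (· ≠ ·) a).length = ((a :: l).zip l).countP (fun p => p.1 ≠ p.2) + 1 := by
  induction l generalizing a with
  | nil => simp
  | cons b l ih =>
    by_cases hab : a = b
    · subst hab
      simp [ih]
    · simp [hab, ih]

theorem zip_tail_reverse (l : List α) :
    l.reverse.zip l.reverse.tail = ((l.zip l.tail).map Prod.swap).reverse := by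
  refine ext_getElem (by simp) fun i h _ => ?_
  simp only [length_zip, length_reverse, length_tail] at h
  simp only [getElem_reverse, getElem_zip, getElem_tail, getElem_map, length_map, length_zip,
    length_tail, Prod.swap_prod_mk, Prod.mk.injEq]
  constructor <;> congr 1 <;> omega

end List

theorem mul_neg_iff_sign_ne {α : Type*} [Ring α] [LinearOrder α] [IsStrictOrderedRing α]
    {a b : α} (ha : a ≠ 0) (hb : b ≠ 0) :
    a * b < 0 ↔ SignType.sign a ≠ SignType.sign b := by
  rcases ha.lt_or_gt with ha | ha <;> rcases hb.lt_or_gt with hb | hb <;>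
    simp [ha, hb, mul_pos_of_neg_of_neg, mul_neg_of_neg_of_pos, mul_neg_of_pos_of_neg, le_of_lt]

theorem signVar_reverse (l : List ℝ) : signVar l.reverse = signVar l := by
  simp only [signVar, List.filter_reverse, List.zip_tail_reverse, List.countP_reverse,
    List.countP_map]
  congr 1
  funext p
  simp [mul_comm]

theorem signVar_eq_length_destutter_sub_one (l : List ℝ) :
    signVar l = (((l.map SignType.sign).filter (· ≠ 0)).destutter (· ≠ ·)).length - 1 := by
  classical
  have hfilter : (l.map SignType.sign).filter (· ≠ 0) = (l.filter (· ≠ 0)).map SignType.sign := by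
    simp [List.filter_map, Function.comp_def]
  rw [hfilter, signVar]
  generalize hm : l.filter (· ≠ 0) = m
  have hm0 : ∀ x ∈ m, x ≠ 0 := by
    subst hm
    intro x hx
    simpa using List.of_mem_filter hx
  rcases m with _ | ⟨a, t⟩
  · simp
  rw [List.map_cons, List.destutter_cons', List.length_destutter'_ne, ← List.map_cons,
    List.zip_map, List.countP_map, Nat.add_sub_cancel, List.tail_cons]
  refine List.countP_congr fun p hp => ?_
  obtain ⟨h1, h2⟩ := List.of_mem_zip hp
  simpa using mul_neg_iff_sign_ne (hm0 _ h1) (hm0 _ (List.mem_cons_of_mem a h2))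

theorem var_eq_signVariations (A : ℝ[X]) : var A = A.signVariations := by
  rcases eq_or_ne A 0 with rfl | hA
  · simp [var, signVar]
  rw [var, ← signVar_reverse, signVar_eq_length_destutter_sub_one, signVariations, coeffList,
    withBotSucc_degree_eq_natDegree_add_one hA]
  simp only [List.map_reverse]

theorem SignType.eq_neg_one_pow_ite_mul {a b : SignType} (ha : a ≠ 0) (hb : b ≠ 0) :
    a = (-1) ^ (if a = -b then 1 else 0) * b := by
  revert a b
  decide

theorem SignType.modEq_two_of_neg_one_pow_eq {m n : ℕ} (h : (-1 : SignType) ^ m = (-1) ^ n) :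
    m ≡ n [MOD 2] := by
  simp only [neg_one_pow_eq_ite] at h
  rw [Nat.ModEq]
  split_ifs at h with hm hn <;> simp_all [Nat.even_iff]

namespace Polynomial

section Semiring

variable {R : Type*} [Semiring R]

theorem trailingCoeff_eraseLead {P : R[X]} (h : P.eraseLead ≠ 0) :
    P.eraseLead.trailingCoeff = P.trailingCoeff := by
  have hP : P ≠ 0 := fun hP => h (by simp [hP])
  have hdeg : P.eraseLead.natDegree < P.natDegree :=
    P.eraseLead_natDegree_lt_or_eraseLead_eq_zero.resolve_right h
  have hcoeff : ∀ i < P.natDegree, P.eraseLead.coeff i = P.coeff i :=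
    fun i hi => eraseLead_coeff_of_ne i hi.ne
  have hk := (natTrailingDegree_le_natDegree P.eraseLead).trans_lt hdeg
  have htrail : P.natTrailingDegree = P.eraseLead.natTrailingDegree := by
    refine le_antisymm (natTrailingDegree_le_of_ne_zero ?_) (le_natTrailingDegree hP fun m hm => ?_)
    · rw [← hcoeff _ hk]
      exact mt trailingCoeff_eq_zero.mp h
    · rw [← hcoeff m (hm.trans hk)]
      exact coeff_eq_zero_of_lt_natTrailingDegree hm
  rw [trailingCoeff, trailingCoeff, htrail, hcoeff _ hk]

variable [LinearOrder R]

theorem sign_leadingCoeff_eq_neg_one_pow_signVariations_mul (P : R[X]) :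
    SignType.sign P.leadingCoeff = (-1) ^ P.signVariations * SignType.sign P.trailingCoeff := by
  induction hn : P.natDegree using Nat.strong_induction_on generalizing P with | _ n ih =>
  rcases eq_or_ne P 0 with rfl | hP
  · simp
  rcases eq_or_ne P.eraseLead 0 with hE | hE
  · have hmon := P.eraseLead_add_monomial_natDegree_leadingCoeff
    rw [hE, zero_add] at hmon
    rw [← hmon]
    simp [trailingCoeff, natTrailingDegree_monomial (leadingCoeff_ne_zero.mpr hP)]
  have hdeg := P.eraseLead_natDegree_lt_or_eraseLead_eq_zero.resolve_right hE
  rw [signVariations_eq_eraseLead_add_ite hP, pow_add, ← trailingCoeff_eraseLead hE,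
    mul_right_comm, ← ih _ (hn ▸ hdeg) _ rfl, mul_comm]
  exact SignType.eq_neg_one_pow_ite_mul (by simpa using hP) (by simpa using hE)

end Semiring

open Filter

theorem eventually_sign_eval_eq_sign_leadingCoeff (P : ℝ[X]) :
    ∀ᶠ x in atTop, SignType.sign (P.eval x) = SignType.sign P.leadingCoeff := by
  obtain ⟨φ, hφ, heq⟩ := P.isEquivalent_atTop_lead.exists_pos_eq_mul
  filter_upwards [hφ, heq, eventually_gt_atTop 0] with x hφx hx hx0
  simp [hx, sign_mul, sign_pos hφx, sign_pos (pow_pos hx0 _)]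

theorem sign_eval_zero_eq_sign_leadingCoeff {P : ℝ[X]} (h : ∀ x, 0 ≤ x → ¬ P.IsRoot x) :
    SignType.sign (P.eval 0) = SignType.sign P.leadingCoeff := by
  obtain ⟨x, hx, hx0⟩ :=
    (P.eventually_sign_eval_eq_sign_leadingCoeff.and (eventually_ge_atTop 0)).exists
  rw [← hx]
  refine isPreconnected_Ici.constant (f := fun y => SignType.sign (P.eval y)) (fun y hy => ?_)
    Set.self_mem_Ici (Set.mem_Ici.mpr hx0)
  exact ((continuousAt_sign_of_ne_zero (h y hy)).comp (f := fun x => P.eval x)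
    P.continuousAt).continuousWithinAt

theorem sign_leadingCoeff_eq_sign_trailingCoeff {P : ℝ[X]} (hP : P ≠ 0)
    (h : ∀ x, 0 < x → ¬ P.IsRoot x) :
    SignType.sign P.leadingCoeff = SignType.sign P.trailingCoeff := by
  set k := P.natTrailingDegree
  obtain ⟨Q, hQ⟩ : X ^ k ∣ P :=
    X_pow_dvd_iff.mpr fun d hd => coeff_eq_zero_of_lt_natTrailingDegree hd
  have hQ0 : Q.eval 0 = P.trailingCoeff := by
    have hcoeff : P.coeff k = Q.coeff 0 := by
      rw [hQ, coeff_X_pow_mul']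
      simp
    rw [← coeff_zero_eq_eval_zero, ← hcoeff]
    rfl
  have hQroot : ∀ x, 0 ≤ x → ¬ Q.IsRoot x := by
    intro x hx hroot
    rcases hx.eq_or_lt with rfl | hx
    · exact trailingCoeff_nonzero_iff_nonzero.mpr hP (hQ0 ▸ hroot)
    · exact h x hx (by rw [hQ]; simp [hroot.eq_zero])
  rw [← hQ0, sign_eval_zero_eq_sign_leadingCoeff hQroot, hQ,
    leadingCoeff_monic_mul (monic_X_pow _)]

theorem sign_leadingCoeff_eq_neg_one_pow_countP_roots_pos_mul (P : ℝ[X]) :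
    SignType.sign P.leadingCoeff =
      (-1) ^ P.roots.countP (0 < ·) * SignType.sign P.trailingCoeff := by
  induction hn : P.roots.countP (0 < ·) generalizing P with
  | zero =>
    rcases eq_or_ne P 0 with rfl | hP
    · simp
    rw [pow_zero, one_mul]
    refine sign_leadingCoeff_eq_sign_trailingCoeff hP fun x hx hroot => ?_
    exact Multiset.countP_eq_zero.mp hn x ((mem_roots hP).mpr hroot) hx
  | succ n ih =>
    obtain ⟨η, hη, hη0⟩ : ∃ x ∈ P.roots, 0 < x := Multiset.countP_pos.mp (hn ▸ n.succ_pos)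
    obtain ⟨Q, rfl⟩ := dvd_iff_isRoot.mpr (isRoot_of_mem_roots hη)
    have hcount : Q.roots.countP (0 < ·) = n := by
      simpa [roots_mul (ne_zero_of_mem_roots hη), hη0] using hn
    have htrail : (X - C η).trailingCoeff = -η := by
      rw [trailingCoeff_eq_coeff_zero] <;> simp [hη0.ne']
    rw [leadingCoeff_monic_mul (monic_X_sub_C η), trailingCoeff_mul, htrail, ih Q hcount,
      sign_mul, pow_succ]
    simp [Left.sign_neg, sign_pos hη0]

end Polynomial

theorem descartes_rule_of_signs_general (A : Polynomial ℝ) :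
    (A.roots.filter fun x => 0 < x).card ≤ var A ∧
    (A.roots.filter fun x => 0 < x).card ≡ var A [MOD 2] := by
  rw [← Multiset.countP_eq_card_filter, var_eq_signVariations]
  refine ⟨roots_countP_pos_le_signVariations A, ?_⟩
  rcases eq_or_ne A 0 with rfl | hA
  · simp [Nat.ModEq]
  have hsign := (sign_leadingCoeff_eq_neg_one_pow_countP_roots_pos_mul A).symm.trans
    (sign_leadingCoeff_eq_neg_one_pow_signVariations_mul A)
  exact SignType.modEq_two_of_neg_one_pow_eq (mul_right_cancel₀ (by simpa using hA) hsign)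

theorem descartes_rule_of_signs (A : Polynomial ℝ) (hA : A ≠ 0) :
    (A.roots.filter fun x => 0 < x).card ≤ var A ∧
    (A.roots.filter fun x => 0 < x).card ≡ var A [MOD 2] :=
  descartes_rule_of_signs_general A
end

section
/- If a real polynomial A has var(A) = 0 sign variations in its coefficients, then A has no positive real roots; if var(A) = 1, then A has exactly one positive real root. -/
open Polynomial

/-!
Replacing `A` by `-A` changes neither `var A` nor the roots, so we may assume the leading
coefficient is positive. If `var A = 0`, all coefficients are then nonnegative and `A > 0` on
`(0, ∞)`. If `var A = 1`, there is an index `m` with the coefficients below `m` nonpositive (one of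
them negative) and the others nonnegative. Then `x A' - m A` has coefficients `(i - m) aᵢ ≥ 0`, not
all zero, so it is positive on `(0, ∞)`: this makes `A(x) / x ^ m` strictly increasing there, so
`A` has at most one positive root `r`, and `r A'(r) > 0` makes it simple. A positive root exists by
the intermediate value theorem, since `A / X ^ k` (`k` the trailing degree) is negative at `0`
and tends to `+∞`.
-/

theorem mul_pos_of_mul_pos_of_mul_pos {a b c : ℝ} (hab : 0 < a * b) (hbc : 0 < b * c) :
    0 < a * c := by
  have hb : 0 < b * b := mul_self_pos.2 (right_ne_zero_of_mul hab.ne')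
  nlinarith [mul_pos hab hbc]

theorem mul_neg_of_mul_pos_of_mul_neg {a b c : ℝ} (hab : 0 < a * b) (hbc : b * c < 0) :
    a * c < 0 := by
  have hb : 0 < b * b := mul_self_pos.2 (right_ne_zero_of_mul hab.ne')
  nlinarith [mul_neg_of_pos_of_neg hab hbc]

theorem mul_neg_of_mul_neg_of_mul_pos {a b c : ℝ} (hab : a * b < 0) (hbc : 0 < b * c) :
    a * c < 0 := by
  have hb : 0 < b * b := mul_self_pos.2 (left_ne_zero_of_mul hbc.ne')
  nlinarith [mul_neg_of_neg_of_pos hab hbc]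

noncomputable def signChanges (l : List ℝ) : ℕ :=
  (l.zip l.tail).countP fun p => p.1 * p.2 < 0

theorem signVar_eq_signChanges_filter (l : List ℝ) :
    signVar l = signChanges (l.filter (· ≠ 0)) := by
  unfold signVar signChanges
  congr 1

@[simp]
theorem signChanges_nil : signChanges [] = 0 := rfl

@[simp]
theorem signChanges_singleton (a : ℝ) : signChanges [a] = 0 := rfl

theorem signChanges_cons_cons (a b : ℝ) (l : List ℝ) :
    signChanges (a :: b :: l) = signChanges (b :: l) + if a * b < 0 then 1 else 0 := by
  simp only [signChanges, List.tail_cons, List.zip_cons_cons, List.countP_cons, decide_eq_true_eq]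

theorem mul_pos_of_signChanges_eq_zero :
    ∀ {l : List ℝ}, (∀ a ∈ l, a ≠ 0) → signChanges l = 0 → ∀ a ∈ l, ∀ b ∈ l, 0 < a * b
  | [], _, _ => by simp
  | [a], hl, _ => by simpa using mul_self_pos.2 (hl a (by simp))
  | a :: b :: t, hl, h => by
    rw [signChanges_cons_cons] at h
    have hab : 0 < a * b := by
      have : ¬ a * b < 0 := fun hab => by simp [hab] at h
      exact (not_lt.1 this).lt_of_ne (mul_ne_zero (hl a (by simp)) (hl b (by simp))).symm
    have ih := mul_pos_of_signChanges_eq_zero (fun x hx => hl x (List.mem_cons_of_mem a hx))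
      (by simpa [hab.not_gt] using h)
    have ha : ∀ x ∈ a :: b :: t, 0 < a * x := by
      rintro x (_ | ⟨_, hx⟩)
      · exact mul_self_pos.2 (hl a (by simp))
      · exact mul_pos_of_mul_pos_of_mul_pos hab (ih b (by simp) x hx)
    intro x hx y hy
    exact mul_pos_of_mul_pos_of_mul_pos (mul_comm a x ▸ ha x hx) (ha y hy)

theorem exists_append_of_signChanges_eq_one :
    ∀ {l : List ℝ}, (∀ a ∈ l, a ≠ 0) → signChanges l = 1 →
      ∃ l₁ l₂, l = l₁ ++ l₂ ∧ l₁ ≠ [] ∧ l₂ ≠ [] ∧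
        (∀ a ∈ l₁, ∀ b ∈ l₂, a * b < 0) ∧ ∀ a ∈ l₂, ∀ b ∈ l₂, 0 < a * b
  | [], _, h | [_], _, h => by simp at h
  | a :: b :: t, hl, h => by
    have hl' : ∀ x ∈ b :: t, x ≠ 0 := fun x hx => hl x (List.mem_cons_of_mem a hx)
    rw [signChanges_cons_cons] at h
    by_cases hab : a * b < 0
    · have hbt := mul_pos_of_signChanges_eq_zero hl' (by simpa [hab] using h)
      refine ⟨[a], b :: t, rfl, by simp, by simp, ?_, hbt⟩
      simp only [List.mem_singleton, forall_eq]
      exact fun x hx => mul_neg_of_mul_neg_of_mul_pos hab (hbt b (by simp) x hx)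
    · obtain ⟨l₁, l₂, hbt, hl₁, hl₂, hcross, hpos⟩ :=
        exists_append_of_signChanges_eq_one hl' (by simpa [hab] using h)
      obtain ⟨c, l₁, rfl⟩ := List.exists_cons_of_ne_nil hl₁
      obtain ⟨rfl, rfl⟩ : c = b ∧ l₁ ++ l₂ = t := by simpa using hbt.symm
      have hac : 0 < a * c :=
        (not_lt.1 hab).lt_of_ne (mul_ne_zero (hl a (by simp)) (hl c (by simp))).symm
      refine ⟨a :: c :: l₁, l₂, rfl, by simp, hl₂, ?_, hpos⟩
      rintro x (_ | ⟨_, hx⟩) y hy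
      · exact mul_neg_of_mul_pos_of_mul_neg hac (hcross c (by simp) y hy)
      · exact hcross x hx y hy

theorem mul_pos_of_signVar_eq_zero {l : List ℝ} (h : signVar l = 0) {a b : ℝ} (ha : a ∈ l)
    (hb : b ∈ l) (ha0 : a ≠ 0) (hb0 : b ≠ 0) : 0 < a * b := by
  rw [signVar_eq_signChanges_filter] at h
  refine mul_pos_of_signChanges_eq_zero (fun x hx => ?_) h a ?_ b ?_ <;>
    simp_all only [List.mem_filter, decide_eq_true_eq, ne_eq, not_false_eq_true, and_self]

theorem exists_append_of_signVar_eq_one {l : List ℝ} (h : signVar l = 1) :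
    ∃ l₁ l₂, l = l₁ ++ l₂ ∧ (∃ a ∈ l₁, a ≠ 0) ∧ l₂ ≠ [] ∧
      (∀ a ∈ l₁, ∀ b ∈ l₂, a ≠ 0 → b ≠ 0 → a * b < 0) ∧
      ∀ a ∈ l₂, ∀ b ∈ l₂, a ≠ 0 → b ≠ 0 → 0 < a * b := by
  rw [signVar_eq_signChanges_filter] at h
  obtain ⟨f₁, f₂, hf, hf₁, hf₂, hcross, hpos⟩ :=
    exists_append_of_signChanges_eq_one (fun x hx => by simpa using (List.mem_filter.1 hx).2) h
  obtain ⟨l₁, l₂, rfl, rfl, rfl⟩ := List.filter_eq_append_iff.1 hf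
  refine ⟨l₁, l₂, rfl, ?_, ?_, ?_, ?_⟩
  · obtain ⟨a, ha⟩ := List.exists_mem_of_ne_nil _ hf₁
    exact ⟨a, by simpa using ha⟩
  · rintro rfl
    simp at hf₂
  · intro a ha b hb ha0 hb0
    exact hcross a (by simpa using ⟨ha, ha0⟩) b (by simpa using ⟨hb, hb0⟩)
  · intro a ha b hb ha0 hb0
    exact hpos a (by simpa using ⟨ha, ha0⟩) b (by simpa using ⟨hb, hb0⟩)

theorem signVar_map_neg (l : List ℝ) : signVar (l.map Neg.neg) = signVar l := by
  simp only [signVar_eq_signChanges_filter, List.filter_map, signChanges, ← List.map_tail,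
    List.zip_map, List.countP_map]
  simp [Function.comp_def]

theorem var_neg (A : ℝ[X]) : var (-A) = var A := by
  have hcoeff : (-A).coeff = Neg.neg ∘ A.coeff := funext (coeff_neg A)
  rw [var, var, natDegree_neg, hcoeff, ← List.map_map, signVar_map_neg]

theorem List.exists_of_map_range_eq_append {α : Type*} {f : ℕ → α} {n : ℕ} {l₁ l₂ : List α}
    (h : (List.range n).map f = l₁ ++ l₂) :
    ∃ m k, n = m + k ∧ l₁ = (List.range m).map f ∧ l₂ = (List.range k).map (fun i => f (m + i)) := by
  have hn : n = l₁.length + l₂.length := by simpa using congrArg List.length h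
  rw [hn, List.range_add, List.map_append, List.map_map] at h
  obtain ⟨h₁, h₂⟩ := List.append_inj h (by simp)
  exact ⟨_, _, hn, h₁.symm, h₂.symm⟩

theorem coeff_nonneg_of_var_eq_zero {A : ℝ[X]} (hlc : 0 < A.leadingCoeff) (h : var A = 0)
    (i : ℕ) : 0 ≤ A.coeff i := by
  by_cases hi : A.coeff i = 0
  · exact hi.ge
  have hmem {j : ℕ} (hj : j ≤ A.natDegree) : A.coeff j ∈ (List.range (A.natDegree + 1)).map A.coeff :=
    List.mem_map_of_mem (List.mem_range.2 (Nat.lt_succ_of_le hj))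
  exact ((mul_pos_iff_of_pos_right hlc).1 <|
    mul_pos_of_signVar_eq_zero h (hmem (le_natDegree_of_ne_zero hi)) (hmem le_rfl) hi hlc.ne').le

theorem exists_coeff_sign_split_of_var_eq_one {A : ℝ[X]} (hlc : 0 < A.leadingCoeff)
    (h : var A = 1) :
    ∃ m, (∀ i < m, A.coeff i ≤ 0) ∧ (∀ i, m ≤ i → 0 ≤ A.coeff i) ∧ ∃ i < m, A.coeff i < 0 := by
  obtain ⟨l₁, l₂, hl, ⟨a, ha, ha0⟩, hl₂, hcross, hpos⟩ := exists_append_of_signVar_eq_one h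
  obtain ⟨m, k, hmk, rfl, rfl⟩ := List.exists_of_map_range_eq_append hl
  have hk : k ≠ 0 := by
    rintro rfl
    simp at hl₂
  have hlc_mem : A.leadingCoeff ∈ (List.range k).map fun i => A.coeff (m + i) :=
    List.mem_map.2 ⟨k - 1, List.mem_range.2 (by omega), by rw [leadingCoeff]; congr 1; omega⟩
  have hneg {c : ℝ} (hc : c ∈ (List.range m).map A.coeff) (hc0 : c ≠ 0) : c < 0 :=
    neg_of_mul_neg_left (hcross c hc _ hlc_mem hc0 hlc.ne') hlc.le
  refine ⟨m, fun i hi => ?_, fun i hi => ?_, ?_⟩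
  · by_cases hi0 : A.coeff i = 0
    · exact hi0.le
    · exact (hneg (List.mem_map_of_mem (List.mem_range.2 hi)) hi0).le
  · by_cases hi0 : A.coeff i = 0
    · exact hi0.ge
    have hin := le_natDegree_of_ne_zero hi0
    have hmem : A.coeff i ∈ (List.range k).map fun i => A.coeff (m + i) :=
      List.mem_map.2 ⟨i - m, List.mem_range.2 (by omega), by congr 1; omega⟩
    exact ((mul_pos_iff_of_pos_right hlc).1 (hpos _ hmem _ hlc_mem hi0 hlc.ne')).le
  · obtain ⟨i, hi, rfl⟩ := List.mem_map.1 ha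
    exact ⟨i, List.mem_range.1 hi, hneg ha ha0⟩

theorem eval_pos_of_coeff_nonneg {A : ℝ[X]} (hA : A ≠ 0) (h : ∀ i, 0 ≤ A.coeff i) {x : ℝ}
    (hx : 0 < x) : 0 < A.eval x := by
  rw [eval_eq_sum_range]
  refine Finset.sum_pos' (fun i _ => mul_nonneg (h i) (pow_nonneg hx.le i))
    ⟨A.natDegree, Finset.self_mem_range_succ _, mul_pos ?_ (pow_pos hx _)⟩
  exact (h _).lt_of_ne (leadingCoeff_ne_zero.2 hA).symm

theorem filter_roots_pos_eq_zero_of_coeff_nonneg {A : ℝ[X]} (hA : A ≠ 0)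
    (h : ∀ i, 0 ≤ A.coeff i) : A.roots.filter (fun x => 0 < x) = 0 :=
  Multiset.filter_eq_nil.2 fun _ hx hx0 =>
    (eval_pos_of_coeff_nonneg hA h hx0).ne' (mem_roots'.1 hx).2

theorem coeff_X_mul_derivative_sub_C_mul {R : Type*} [CommRing R] (A : R[X]) (m i : ℕ) :
    (X * derivative A - C (m : R) * A).coeff i = ((i : R) - m) * A.coeff i := by
  cases i with
  | zero => simp [mul_coeff_zero]
  | succ j =>
    rw [coeff_sub, coeff_C_mul, coeff_X_mul, coeff_derivative]
    push_cast
    ring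

theorem eval_X_mul_derivative_sub_pos {A : ℝ[X]} {m : ℕ} (hlow : ∀ i < m, A.coeff i ≤ 0)
    (hhigh : ∀ i, m ≤ i → 0 ≤ A.coeff i) (hneg : ∃ i < m, A.coeff i < 0) {x : ℝ} (hx : 0 < x) :
    0 < x * (derivative A).eval x - m * A.eval x := by
  set B := X * derivative A - C (m : ℝ) * A
  have hB : ∀ i, 0 ≤ B.coeff i := by
    intro i
    rw [coeff_X_mul_derivative_sub_C_mul]
    rcases lt_or_ge i m with hi | hi
    · exact mul_nonneg_of_nonpos_of_nonpos (by simpa using hi.le) (hlow i hi)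
    · exact mul_nonneg (by simpa using hi) (hhigh i hi)
  have hB0 : B ≠ 0 := by
    obtain ⟨i, hi, hai⟩ := hneg
    intro hB0
    have hBi := coeff_X_mul_derivative_sub_C_mul A m i
    rw [show X * derivative A - C (m : ℝ) * A = 0 from hB0, coeff_zero] at hBi
    exact (mul_pos_of_neg_of_neg (by simpa using hi) hai).ne hBi
  simpa [B] using eval_pos_of_coeff_nonneg hB0 hB hx

theorem strictMonoOn_eval_div_pow {A : ℝ[X]} {m : ℕ}
    (h : ∀ x, 0 < x → 0 < x * (derivative A).eval x - m * A.eval x) :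
    StrictMonoOn (fun x => A.eval x / x ^ m) (Set.Ioi 0) := by
  refine strictMonoOn_of_deriv_pos (convex_Ioi 0) ?_ fun x hx => ?_
  · exact A.continuous.continuousOn.div (continuous_pow m).continuousOn
      fun x hx => pow_ne_zero _ (ne_of_gt hx)
  rw [interior_Ioi] at hx
  have hx : 0 < x := hx
  have hd : HasDerivAt (fun x => A.eval x / x ^ m) _ x :=
    (A.hasDerivAt x).div (hasDerivAt_pow m x) (pow_ne_zero _ hx.ne')
  rw [hd.deriv]
  refine div_pos (pos_of_mul_pos_right (a := x) ?_ hx.le) (by positivity)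
  have hpow : (m : ℝ) * x ^ (m - 1) * x = m * x ^ m := by
    cases m with
    | zero => simp
    | succ k => rw [Nat.add_sub_cancel, mul_assoc, ← pow_succ]
  calc 0 < x ^ m * (x * (derivative A).eval x - m * A.eval x) := mul_pos (pow_pos hx m) (h x hx)
    _ = _ := by linear_combination (A.eval x) * hpow

theorem exists_pos_isRoot_of_eval_zero_neg {A : ℝ[X]} (h0 : A.eval 0 < 0)
    (hlc : 0 < A.leadingCoeff) : ∃ r, 0 < r ∧ A.IsRoot r := by
  have hdeg : 0 < A.degree := by
    by_contra! hdeg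
    rw [eq_C_of_degree_le_zero hdeg] at h0 hlc
    simp only [eval_C, leadingCoeff_C] at h0 hlc
    exact h0.not_gt hlc
  obtain ⟨M, hM, hM0⟩ := ((A.tendsto_atTop_of_leadingCoeff_nonneg hdeg hlc.le).eventually
    (Filter.eventually_gt_atTop 0) |>.and (Filter.eventually_gt_atTop 0)).exists
  obtain ⟨r, hr, hr0⟩ := intermediate_value_Ioo hM0.le A.continuous.continuousOn ⟨h0, hM⟩
  exact ⟨r, hr.1, hr0⟩

theorem exists_pos_isRoot_of_trailingCoeff_neg {A : ℝ[X]} (ht : A.trailingCoeff < 0)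
    (hlc : 0 < A.leadingCoeff) : ∃ r, 0 < r ∧ A.IsRoot r := by
  set k := A.natTrailingDegree
  obtain ⟨Q, hQ⟩ : X ^ k ∣ A :=
    X_pow_dvd_iff.2 fun d hd => coeff_eq_zero_of_lt_natTrailingDegree hd
  have hQ0 : Q.eval 0 = A.trailingCoeff := by
    have hk : A.coeff k = Q.coeff 0 := by
      rw [hQ, coeff_X_pow_mul', if_pos le_rfl, Nat.sub_self]
    rw [← coeff_zero_eq_eval_zero, ← hk]
    rfl
  have hQlc : Q.leadingCoeff = A.leadingCoeff := by
    rw [hQ, leadingCoeff_mul, leadingCoeff_X_pow, one_mul]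
  obtain ⟨r, hr, hQr⟩ := exists_pos_isRoot_of_eval_zero_neg (hQ0 ▸ ht) (hQlc ▸ hlc)
  exact ⟨r, hr, by rw [hQ, IsRoot, eval_mul, hQr.eq_zero, mul_zero]⟩

theorem card_filter_roots_pos_eq_one {A : ℝ[X]} {r : ℝ} (hr : 0 < r) (hroot : A.IsRoot r)
    (hderiv : (derivative A).eval r ≠ 0) (huniq : ∀ s, 0 < s → A.IsRoot s → s = r) :
    (A.roots.filter fun x => 0 < x).card = 1 := by
  classical
  have hA : A ≠ 0 := by
    rintro rfl
    simp at hderiv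
  have hsimple : A.rootMultiplicity r = 1 :=
    le_antisymm (not_lt.1 fun h => hderiv ((one_lt_rootMultiplicity_iff_isRoot hA).1 h).2)
      ((rootMultiplicity_pos hA).2 hroot)
  rw [← Multiset.count_eq_card.2 fun s hs => ?_, Multiset.count_filter_of_pos hr, count_roots,
    hsimple]
  obtain ⟨hs, hs0⟩ := Multiset.mem_filter.1 hs
  exact (huniq s hs0 (mem_roots'.1 hs).2).symm

theorem card_filter_roots_pos_eq_one_of_coeff_sign_split {A : ℝ[X]} {m : ℕ}
    (hlc : 0 < A.leadingCoeff) (hlow : ∀ i < m, A.coeff i ≤ 0)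
    (hhigh : ∀ i, m ≤ i → 0 ≤ A.coeff i) (hneg : ∃ i < m, A.coeff i < 0) :
    (A.roots.filter fun x => 0 < x).card = 1 := by
  have hA : A ≠ 0 := leadingCoeff_ne_zero.1 hlc.ne'
  have hB {x : ℝ} (hx : 0 < x) := eval_X_mul_derivative_sub_pos hlow hhigh hneg hx
  have ht : A.trailingCoeff < 0 := by
    obtain ⟨i, hi, hai⟩ := hneg
    exact (hlow _ ((natTrailingDegree_le_of_ne_zero hai.ne).trans_lt hi)).lt_of_ne
      (trailingCoeff_nonzero_iff_nonzero.2 hA)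
  obtain ⟨r, hr, hroot⟩ := exists_pos_isRoot_of_trailingCoeff_neg ht hlc
  refine card_filter_roots_pos_eq_one hr hroot ?_ fun s hs hsroot =>
    (strictMonoOn_eval_div_pow fun x hx => hB hx).injOn hs hr
      (by simp only [hsroot.eq_zero, hroot.eq_zero, zero_div])
  have hr' := hB hr
  rw [hroot.eq_zero, mul_zero, sub_zero] at hr'
  exact (pos_of_mul_pos_right hr' hr.le).ne'

theorem descartes_zero_one (A : Polynomial ℝ) (hA : A ≠ 0) :
    (var A = 0 → (A.roots.filter fun x => 0 < x).card = 0) ∧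
    (var A = 1 → (A.roots.filter fun x => 0 < x).card = 1) := by
  wlog hlc : 0 < A.leadingCoeff generalizing A
  · have hlc' : 0 < (-A).leadingCoeff := by
      rw [leadingCoeff_neg, neg_pos]
      exact (not_lt.1 hlc).lt_of_ne (leadingCoeff_ne_zero.2 hA)
    simpa only [var_neg, roots_neg] using this (-A) (neg_ne_zero.2 hA) hlc'
  refine ⟨fun h => ?_, fun h => ?_⟩
  · rw [Multiset.card_eq_zero]
    exact filter_roots_pos_eq_zero_of_coeff_nonneg hA (coeff_nonneg_of_var_eq_zero hlc h)
  · obtain ⟨m, hlow, hhigh, hneg⟩ := exists_coeff_sign_split_of_var_eq_one hlc h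
    exact card_filter_roots_pos_eq_one_of_coeff_sign_split hlc hlow hhigh hneg
end
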